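/- arXiv:2307.01460 — 3 statements merged into one kernel-verified Lean document; each statement's English description precedes it below -/
import Mathlib

section
/- For every integer k ≥ 4, every k-vertex-critical graph has no 2-edge-cut. -/
open SimpleGraph

variable {V : Type*}

/-- The set of internal vertices of a walk from `x` to `y`. -/
def wInterior {G : SimpleGraph V} {x y : V} (P : G.Walk x y) : Set V :=
  {a | a ∈ P.support ∧ a ≠ x ∧ a ≠ y}

/-- `P` is an induced path of `G`. -/
def IsInducedPath (G : SimpleGraph V) {x y : V} (P : G.Walk x y) : Prop :=
  P.IsPath ∧ ∀ a ∈ P.support, ∀ b ∈ P.support, G.Adj a b → s(a, b) ∈ P.edges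

/-- A hole of `G`: an induced cycle of length at least 4. -/
def IsHole (G : SimpleGraph V) {v : V} (w : G.Walk v v) : Prop :=
  w.IsCycle ∧ 4 ≤ w.length ∧
    ∀ a ∈ w.support, ∀ b ∈ w.support, G.Adj a b → s(a, b) ∈ w.edges

/-- An odd hole of `G`. -/
def IsOddHole (G : SimpleGraph V) {v : V} (w : G.Walk v v) : Prop :=
  IsHole G w ∧ Odd w.length

/-- `G` belongs to the family `𝒢ₗ`: it has girth `2l+1` and
no odd hole of length at least `2l+3`. -/
def MemGFam (G : SimpleGraph V) (l : ℕ) : Prop :=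
  G.girth = (2 * l + 1 : ℕ) ∧
    ∀ (v : V) (w : G.Walk v v), IsOddHole G w → w.length < 2 * l + 3

/-- `G` is `k`-vertex-critical. -/
def IsVertexCritical (G : SimpleGraph V) (k : ℕ) : Prop :=
  G.chromaticNumber = k ∧
    ∀ v : V, (G.induce {u | u ≠ v}).chromaticNumber < k

/-- `S` is a vertex cut of `G`: deleting `S` leaves a disconnected graph. -/
def IsVertexCut (G : SimpleGraph V) (S : Set V) : Prop :=
  ¬ (G.induce Sᶜ).Preconnected

/-- `G` has a `K2`-cut. -/
def HasK2Cut (G : SimpleGraph V) : Prop :=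
  ∃ u v : V, G.Adj u v ∧ IsVertexCut G {u, v}

/-- `G` has a `P3`-cut. -/
def HasP3Cut (G : SimpleGraph V) : Prop :=
  ∃ u v w : V, u ≠ w ∧ G.Adj u v ∧ G.Adj v w ∧ ¬ G.Adj u w ∧ IsVertexCut G {u, v, w}

/-- `G` has a 2-edge-cut: two edges whose removal disconnects the graph. -/
def Has2EdgeCut (G : SimpleGraph V) : Prop :=
  ∃ e f : Sym2 V, e ≠ f ∧ e ∈ G.edgeSet ∧ f ∈ G.edgeSet ∧
    ¬ (G.deleteEdges {e, f}).Preconnected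

/-- `Q1`, `Q2` are the two internally disjoint `(x,y)`-paths of the cycle `w`. -/
def ArcsOf (G : SimpleGraph V) {v x y : V} (w : G.Walk v v) (Q1 Q2 : G.Walk x y) : Prop :=
  x ∈ w.support ∧ y ∈ w.support ∧ x ≠ y ∧ Q1.IsPath ∧ Q2.IsPath ∧
    ({a | a ∈ Q1.support} ∩ {a | a ∈ Q2.support} = {x, y}) ∧
    ({e | e ∈ w.edges} = {e | e ∈ Q1.edges} ∪ {e | e ∈ Q2.edges})

/-- `P` is a chordal path of the hole `w`: `w ∪ P` is an induced theta-subgraph of `G`. -/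
def IsChordalPath (G : SimpleGraph V) {v x y : V} (w : G.Walk v v) (P : G.Walk x y) : Prop :=
  IsHole G w ∧ P.IsPath ∧ 2 ≤ P.length ∧ x ∈ w.support ∧ y ∈ w.support ∧ x ≠ y ∧
    (∀ a ∈ wInterior P, a ∉ w.support) ∧
    (∀ a, (a ∈ w.support ∨ a ∈ P.support) → ∀ b, (b ∈ w.support ∨ b ∈ P.support) →
      G.Adj a b → (s(a, b) ∈ w.edges ∨ s(a, b) ∈ P.edges))

/-- `P` is an `(s,t)`-jump over the hole `w`. -/
def IsJump (G : SimpleGraph V) {v s t : V} (w : G.Walk v v) (P : G.Walk s t) : Prop :=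
  IsHole G w ∧ s ∈ w.support ∧ t ∈ w.support ∧ s ≠ t ∧ ¬ G.Adj s t ∧
    IsInducedPath G P ∧ ∀ a ∈ wInterior P, a ∉ w.support

/-- `P` is a local jump over `w` across the interior of the arc `Q1`
(`Q1`, `Q2` being the two arcs of `w` between the ends of `P`). -/
def IsLocalJumpAcross (G : SimpleGraph V) {v s t : V} (w : G.Walk v v)
    (P Q1 Q2 : G.Walk s t) : Prop :=
  IsJump G w P ∧ ArcsOf G w Q1 Q2 ∧
    (∃ a ∈ wInterior Q1, ∃ b ∈ wInterior P, G.Adj a b) ∧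
    (∀ a ∈ wInterior Q2, ∀ b ∈ wInterior P, ¬ G.Adj a b)

/-- `P` is a local jump over `w`. -/
def IsLocalJump (G : SimpleGraph V) {v s t : V} (w : G.Walk v v) (P : G.Walk s t) : Prop :=
  ∃ Q1 Q2 : G.Walk s t, IsLocalJumpAcross G w P Q1 Q2

/-- `P` is a local jump over `w` across one vertex. -/
def IsLocalJumpAcrossOne (G : SimpleGraph V) {v s t : V} (w : G.Walk v v)
    (P : G.Walk s t) : Prop :=
  ∃ Q1 Q2 : G.Walk s t, IsLocalJumpAcross G w P Q1 Q2 ∧ Q1.length = 2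

/-- `P` is a short jump over `w`: no internal vertex of either arc of `w`
has a neighbour among the internal vertices of `P`. -/
def IsShortJump (G : SimpleGraph V) {v s t : V} (w : G.Walk v v) (P : G.Walk s t) : Prop :=
  IsJump G w P ∧
    ∀ a ∈ w.support, a ≠ s → a ≠ t → ∀ b ∈ wInterior P, ¬ G.Adj a b

/-- `P` is a short jump over `w` across the interior of `Q1`, i.e. `P ∪ Q1` is an
odd hole (a jump hole over `w`). -/
def IsShortJumpAcross (G : SimpleGraph V) {v s t : V} (w : G.Walk v v)
    (P Q1 Q2 : G.Walk s t) : Prop :=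
  IsShortJump G w P ∧ ArcsOf G w Q1 Q2 ∧ IsOddHole G (P.append Q1.reverse)

/-- `x` lies in some jump hole over `w`. -/
def InJumpHoleOver (G : SimpleGraph V) {v : V} (w : G.Walk v v) (x : V) : Prop :=
  ∃ (s t : V) (P Q1 Q2 : G.Walk s t),
    IsShortJumpAcross G w P Q1 Q2 ∧ (x ∈ P.support ∨ x ∈ Q1.support)

/-- `a`, `b`, `c`, `d` appear on the cycle `w` in this cyclic order. -/
def CyclicOrder4 (G : SimpleGraph V) {v : V} (w : G.Walk v v) (a b c d : V) : Prop :=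
  ∃ n : ℕ, List.Sublist [a, b, c, d] (w.support.tail.rotate n)

/-- A `K4`-subdivision in `G`: four distinct branch vertices joined by six
internally disjoint paths (the arrises). -/
structure K4Sub (G : SimpleGraph V) where
  u1 : V
  u2 : V
  u3 : V
  u4 : V
  P1 : G.Walk u1 u2
  P2 : G.Walk u3 u4
  Q1 : G.Walk u2 u3
  Q2 : G.Walk u1 u4
  L1 : G.Walk u1 u3
  L2 : G.Walk u2 u4
  hu : List.Nodup [u1, u2, u3, u4]
  hP1 : P1.IsPath
  hP2 : P2.IsPath
  hQ1 : Q1.IsPath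
  hQ2 : Q2.IsPath
  hL1 : L1.IsPath
  hL2 : L2.IsPath
  hP : ∀ a ∈ P1.support, a ∉ P2.support
  hQ : ∀ a ∈ Q1.support, a ∉ Q2.support
  hL : ∀ a ∈ L1.support, a ∉ L2.support

namespace K4Sub

variable {G : SimpleGraph V}

/-- The face cycle `C1 = P1 ∪ Q1 ∪ L1`. -/
def C1 (H : K4Sub G) : G.Walk H.u1 H.u1 := (H.P1.append H.Q1).append H.L1.reverse
/-- The face cycle `C2 = P1 ∪ Q2 ∪ L2`. -/
def C2 (H : K4Sub G) : G.Walk H.u1 H.u1 := (H.P1.append H.L2).append H.Q2.reverse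
/-- The face cycle `C3 = P2 ∪ Q1 ∪ L2`. -/
def C3 (H : K4Sub G) : G.Walk H.u2 H.u2 := (H.Q1.append H.P2).append H.L2.reverse
/-- The face cycle `C4 = C1 △ C2 △ C3 = P2 ∪ Q2 ∪ L1`. -/
def C4 (H : K4Sub G) : G.Walk H.u1 H.u1 := (H.L1.append H.P2).append H.Q2.reverse

/-- The vertex set of the subdivision. -/
def verts (H : K4Sub G) : Set V :=
  {a | a ∈ H.P1.support ∨ a ∈ H.P2.support ∨ a ∈ H.Q1.support ∨
       a ∈ H.Q2.support ∨ a ∈ H.L1.support ∨ a ∈ H.L2.support}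

/-- The edge set of the subdivision. -/
def edges (H : K4Sub G) : Set (Sym2 V) :=
  {e | e ∈ H.P1.edges ∨ e ∈ H.P2.edges ∨ e ∈ H.Q1.edges ∨
       e ∈ H.Q2.edges ∨ e ∈ H.L1.edges ∨ e ∈ H.L2.edges}

end K4Sub

/-- `H` is an odd `K4`-subdivision: all four face cycles are odd holes. -/
def IsOddK4 (G : SimpleGraph V) (H : K4Sub G) : Prop :=
  IsOddHole G H.C1 ∧ IsOddHole G H.C2 ∧ IsOddHole G H.C3 ∧ IsOddHole G H.C4

/-- `G` has an odd `K4`-subdivision. -/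
def HasOddK4 (G : SimpleGraph V) : Prop := ∃ H : K4Sub G, IsOddK4 G H

/-- `H` is a balanced `K4`-subdivision of type `(1,2)`. -/
def IsBalancedK4 (G : SimpleGraph V) (H : K4Sub G) : Prop :=
  IsOddHole G H.C1 ∧ IsOddHole G H.C2 ∧
    IsHole G H.C3 ∧ Even H.C3.length ∧ IsHole G H.C4 ∧ Even H.C4.length ∧
    H.Q1.length = 1 ∧ 2 ≤ H.L2.length

/-- `G` contains a balanced `K4`-subdivision of type `(1,2)`. -/
def HasBalancedK4 (G : SimpleGraph V) : Prop := ∃ H : K4Sub G, IsBalancedK4 G H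

/-- `P` is a direct connection linking the (vertex sets of) two disjoint induced
subgraphs `S1` and `S2`. -/
def IsDirectConnection (G : SimpleGraph V) (S1 S2 : Set V) {v1 v2 : V}
    (P : G.Walk v1 v2) : Prop :=
  IsInducedPath G P ∧ (∀ x ∈ P.support, x ∉ S1 ∧ x ∉ S2) ∧
    (∃ y ∈ S1, G.Adj v1 y) ∧ (∃ y ∈ S2, G.Adj v2 y) ∧
    (∀ x ∈ P.support, (∃ y ∈ S1, G.Adj x y) → x = v1) ∧
    (∀ x ∈ P.support, (∃ y ∈ S2, G.Adj x y) → x = v2)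

/-- `P` is a minimal direct connection linking `S1` and `S2`. -/
def IsMinimalDirectConnection (G : SimpleGraph V) (S1 S2 : Set V) {v1 v2 : V}
    (P : G.Walk v1 v2) : Prop :=
  IsDirectConnection G S1 S2 P ∧
    ∀ (w1 w2 : V) (P' : G.Walk w1 w2), IsDirectConnection G S1 S2 P' →
      (∀ x ∈ P'.support, x ∈ P.support) → ∀ x ∈ P.support, x ∈ P'.support

/-- For every integer `k ≥ 4`, every `k`-vertex-critical graph
has no 2-edge-cut. -/
theorem k_critical_no_two_edge_cut {V : Type*} [Fintype V]
    (k : ℕ) (hk : 4 ≤ k) (G : SimpleGraph V) (hcrit : IsVertexCritical G k) :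
    ¬ Has2EdgeCut G := by
  classical
  rintro ⟨e, f, hef, he, hf, hdisc⟩
  rw [SimpleGraph.Preconnected] at hdisc
  push_neg at hdisc
  obtain ⟨u, w, huw⟩ := hdisc
  set A : Set V := {x | (G.deleteEdges {e, f}).Reachable u x} with hAdef
  have huA : u ∈ A := SimpleGraph.Reachable.refl u
  have hwA : w ∉ A := huw
  -- any crossing edge is e or f
  have hclose : ∀ a b, a ∈ A → G.Adj a b → b ∉ A →
      s(a, b) = e ∨ s(a, b) = f := by
    intro a b ha hab hb
    by_contra hc
    push_neg at hc
    refine hb (ha.trans (SimpleGraph.Adj.reachable ?_))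
    rw [SimpleGraph.deleteEdges_adj]
    exact ⟨hab, by simp [hc.1, hc.2]⟩
  set m := k - 1 with hm
  haveI : NeZero m := ⟨by omega⟩
  -- a helper to extract colorings from criticality
  have getcol : ∀ v0 : V, ∃ fc : V → Fin m,
      ∀ a b, a ≠ v0 → b ≠ v0 → G.Adj a b → fc a ≠ fc b := by
    intro v0
    have hlt := hcrit.2 v0
    obtain ⟨n, hn, hnk⟩ := WithTop.lt_iff_exists_coe.mp hlt
    have hnk' : n < k := WithTop.coe_lt_coe.mp hnk
    have hcol : (G.induce {u | u ≠ v0}).Colorable m := by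
      have : (G.induce {u | u ≠ v0}).Colorable n := by
        rw [← SimpleGraph.chromaticNumber_le_iff_colorable, hn]; exact le_refl _
      exact this.mono (by omega)
    obtain ⟨C⟩ := hcol
    refine ⟨fun v => if h : v ≠ v0 then C ⟨v, h⟩ else 0, ?_⟩
    intro a b ha hb hab
    simp only [dif_pos ha, dif_pos hb]
    exact C.valid (by simpa using hab)
  obtain ⟨fA, hfA⟩ := getcol w
  obtain ⟨fB, hfB⟩ := getcol u
  have hfA' : ∀ a b, a ∈ A → b ∈ A → G.Adj a b → fA a ≠ fA b := by
    intro a b ha hb hab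
    exact hfA a b (fun h => hwA (h ▸ ha)) (fun h => hwA (h ▸ hb)) hab
  have hfB' : ∀ a b, a ∉ A → b ∉ A → G.Adj a b → fB a ≠ fB b := by
    intro a b ha hb hab
    exact hfB a b (fun h => ha (h ▸ huA)) (fun h => hb (h ▸ huA)) hab
  -- uniqueness of a crossing pair representing a given edge
  have huniq : ∀ a b a' b' : V, a ∈ A → b ∉ A → a' ∈ A → b' ∉ A →
      s(a, b) = s(a', b') → a = a' ∧ b = b' := by
    intro a b a' b' ha hb ha' hb' hs
    rw [Sym2.eq_iff] at hs
    rcases hs with ⟨h1, h2⟩ | ⟨h1, h2⟩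
    · exact ⟨h1, h2⟩
    · exact absurd (h1 ▸ ha) hb'
  -- at most two "bad" differences
  have hpairs : ∃ t1 t2 : Fin m, ∀ a b, a ∈ A → b ∉ A → G.Adj a b →
      fA a - fB b = t1 ∨ fA a - fB b = t2 := by
    by_cases h1 : ∃ a b, a ∈ A ∧ b ∉ A ∧ G.Adj a b ∧ s(a, b) = e
    · obtain ⟨a1, b1, ha1, hb1, -, hs1⟩ := h1
      by_cases h2 : ∃ a b, a ∈ A ∧ b ∉ A ∧ G.Adj a b ∧ s(a, b) = f
      · obtain ⟨a2, b2, ha2, hb2, -, hs2⟩ := h2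
        refine ⟨fA a1 - fB b1, fA a2 - fB b2, ?_⟩
        intro a b ha hb hab
        rcases hclose a b ha hab hb with hs | hs
        · obtain ⟨rfl, rfl⟩ := huniq a b a1 b1 ha hb ha1 hb1 (hs.trans hs1.symm)
          exact Or.inl rfl
        · obtain ⟨rfl, rfl⟩ := huniq a b a2 b2 ha hb ha2 hb2 (hs.trans hs2.symm)
          exact Or.inr rfl
      · refine ⟨fA a1 - fB b1, fA a1 - fB b1, ?_⟩
        intro a b ha hb hab
        rcases hclose a b ha hab hb with hs | hs
        · obtain ⟨rfl, rfl⟩ := huniq a b a1 b1 ha hb ha1 hb1 (hs.trans hs1.symm)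
          exact Or.inl rfl
        · exact absurd ⟨a, b, ha, hb, hab, hs⟩ h2
    · by_cases h2 : ∃ a b, a ∈ A ∧ b ∉ A ∧ G.Adj a b ∧ s(a, b) = f
      · obtain ⟨a2, b2, ha2, hb2, -, hs2⟩ := h2
        refine ⟨fA a2 - fB b2, fA a2 - fB b2, ?_⟩
        intro a b ha hb hab
        rcases hclose a b ha hab hb with hs | hs
        · exact absurd ⟨a, b, ha, hb, hab, hs⟩ h1
        · obtain ⟨rfl, rfl⟩ := huniq a b a2 b2 ha hb ha2 hb2 (hs.trans hs2.symm)
          exact Or.inl rfl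
      · refine ⟨0, 0, ?_⟩
        intro a b ha hb hab
        rcases hclose a b ha hab hb with hs | hs
        · exact absurd ⟨a, b, ha, hb, hab, hs⟩ h1
        · exact absurd ⟨a, b, ha, hb, hab, hs⟩ h2
  obtain ⟨t1, t2, hpairs⟩ := hpairs
  -- choose a good shift
  have ht : ∃ t : Fin m, t ≠ t1 ∧ t ≠ t2 := by
    by_contra hcon
    push_neg at hcon
    have hsub : (Finset.univ : Finset (Fin m)) ⊆ {t1, t2} := by
      intro t _
      rcases eq_or_ne t t1 with h | h
      · simp [h]
      · simp [hcon t h]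
    have hcard := Finset.card_le_card hsub
    have h2 : ({t1, t2} : Finset (Fin m)).card ≤ 2 :=
      Finset.card_insert_le _ _ |>.trans (by simp)
    rw [Finset.card_univ, Fintype.card_fin] at hcard
    omega
  obtain ⟨t, ht1, ht2⟩ := ht
  -- the combined coloring
  set c : V → Fin m := fun v => if v ∈ A then fA v else fB v + t with hc
  have hcval : ∀ {a b : V}, G.Adj a b → c a ≠ c b := by
    have key : ∀ a b : V, a ∈ A → b ∉ A → G.Adj a b → c a ≠ c b := by
      intro a b ha hb hab hcc
      simp only [hc, if_pos ha, if_neg hb] at hcc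
      have : fA a - fB b = t := by
        rw [hcc]; exact add_sub_cancel_left _ _
      rcases hpairs a b ha hb hab with h | h
      · exact ht1 (this ▸ h ▸ rfl)
      · exact ht2 (this ▸ h ▸ rfl)
    intro a b hab
    by_cases ha : a ∈ A <;> by_cases hb : b ∈ A
    · simp only [hc, if_pos ha, if_pos hb]
      exact hfA' a b ha hb hab
    · exact key a b ha hb hab
    · exact fun hcc => key b a hb ha hab.symm hcc.symm
    · simp only [hc, if_neg ha, if_neg hb]
      intro hcc
      exact hfB' a b ha hb hab (add_right_cancel hcc)
  have hcolm : G.Colorable m := ⟨SimpleGraph.Coloring.mk c fun hab => hcval hab⟩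
  have := hcolm.chromaticNumber_le
  rw [hcrit.1] at this
  have : k ≤ m := by exact_mod_cast this
  omega
end

section
/- Let l ≥ 2 be an integer and let H be a subgraph of a graph G ∈ 𝒢_l such that H is an odd K4-subdivision. Then: (1) each pair of vertex-disjoint arrises of H have the same length, and all arrises have length at most l; (2) H is an induced subgraph of G; (3) if moreover l ≥ 3, then no vertex of V(G) \ V(H) has two or more neighbours in H. -/
open SimpleGraph

variable {V : Type*}

/-!
Each face is an odd hole, so girth `2l+1` and the absence of longer odd holes give every face
length exactly `2l+1`. Comparing faces that share an arris shows that opposite arrises have equal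
length, and the cycle formed by two pairs of opposite arrises bounds the third pair by `l`.
Two vertices of `H` on a common face cannot be joined by a chord of it nor (for `l ≥ 2`) have a
common neighbour outside it, and every two non-opposite arrises lie on a common face. For
vertices `y`, `z` on opposite arrises, cutting these arrises at `y` and `z` gives four routes from
`y` to `z` through `H`, each closing a circuit with an edge `yz` or a path `y x z`; the girth
bound on these four circuits is contradictory.

Cycles enter only through circuits: no edge is used twice by the six arrises, so every closed walk
assembled from pieces of them and from a path edge-disjoint from `H` is a circuit, and
`Walk.IsCircuit.girth_le_length` applies.
-/

theorem List.Disjoint.count_eq_zero_or {α : Type*} [DecidableEq α] {l₁ l₂ : List α}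
    (h : l₁.Disjoint l₂) (a : α) : l₁.count a = 0 ∨ l₂.count a = 0 := by
  by_cases ha : a ∈ l₁
  · exact .inr (List.count_eq_zero_of_not_mem (h ha))
  · exact .inl (List.count_eq_zero_of_not_mem ha)

namespace SimpleGraph

variable {G : SimpleGraph V}

namespace Walk

theorem isTrail_iff_count_le_one [DecidableEq V] {u v : V} {p : G.Walk u v} :
    p.IsTrail ↔ ∀ e, p.edges.count e ≤ 1 := by
  rw [isTrail_def, List.nodup_iff_count_le_one]

theorem disjoint_edges_of_disjoint_support {u v x y : V} {p : G.Walk u v} {q : G.Walk x y}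
    (h : ∀ a ∈ p.support, a ∉ q.support) : p.edges.Disjoint q.edges := fun e hp hq =>
  h _ (mem_support_of_mem_edges hp e.out_fst_mem) (mem_support_of_mem_edges hq e.out_fst_mem)

end Walk

theorem girth_le_length_of_isTrail {u : V} {w : G.Walk u u} (hw : w.IsTrail)
    (hw0 : w.length ≠ 0) : G.girth ≤ w.length :=
  Walk.IsCircuit.girth_le_length ⟨hw, fun h => hw0 (by simp [h])⟩

theorem girth_le_length_add_of_count_le [DecidableEq V] {a b c d : V} (w₁ : G.Walk a b)
    (w₂ : G.Walk b c) (w₃ : G.Walk c d) (w₄ : G.Walk d a)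
    (hcount : ∀ e, w₁.edges.count e + w₂.edges.count e + w₃.edges.count e +
      w₄.edges.count e ≤ 1)
    (hpos : w₁.length + w₂.length + w₃.length + w₄.length ≠ 0) :
    G.girth ≤ w₁.length + w₂.length + w₃.length + w₄.length := by
  simpa using girth_le_length_of_isTrail (w := ((w₁.append w₂).append w₃).append w₄)
    (Walk.isTrail_iff_count_le_one.2 fun e => by
      simpa only [Walk.edges_append, List.count_append] using hcount e)
    (by simpa only [Walk.length_append] using hpos)

/-- A trail `T` joining two vertices of a closed trail `C`, edge-disjoint from `C`, closes a
circuit with each of the two arcs of `C` between its ends. -/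
theorem two_mul_girth_le_of_isTrail {v y z : V} {C : G.Walk v v} (hC : C.IsTrail)
    (hy : y ∈ C.support) (hz : z ∈ C.support) (hyz : y ≠ z) {T : G.Walk z y} (hT : T.IsTrail)
    (hCT : ∀ e ∈ T.edges, e ∉ C.edges) : 2 * G.girth ≤ C.length + 2 * T.length := by
  classical
  have hz' : z ∈ (C.rotate y hy).support := (C.mem_support_rotate_iff y hy).2 hz
  set a := (C.rotate y hy).takeUntil z hz'
  set b := (C.rotate y hy).dropUntil z hz'
  have hsplit : a.append b = C.rotate y hy := Walk.take_spec _ hz'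
  have hlen : a.length + b.length = C.length := by
    rw [← Walk.length_append, hsplit, Walk.length_rotate]
  have hT0 : T.length ≠ 0 := fun h => hyz (T.eq_of_length_eq_zero h).symm
  have hcount : ∀ e, a.edges.count e + b.edges.count e + T.edges.count e ≤ 1 := by
    intro e
    have hab : a.edges.count e + b.edges.count e = C.edges.count e := by
      rw [← List.count_append, ← Walk.edges_append, hsplit, (C.rotate_edges y hy).perm.count_eq]
    have hCe := Walk.isTrail_iff_count_le_one.1 hC e
    have hTe := Walk.isTrail_iff_count_le_one.1 hT e
    have hdisj : C.edges.Disjoint T.edges := fun _ h₁ h₂ => hCT _ h₂ h₁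
    rcases hdisj.count_eq_zero_or e with h | h <;> omega
  have ha := girth_le_length_of_isTrail (w := a.append T)
    (Walk.isTrail_iff_count_le_one.2 fun e => by
      have := hcount e
      simp only [Walk.edges_append, List.count_append]
      omega)
    (by simp only [Walk.length_append]; omega)
  have hb := girth_le_length_of_isTrail (w := b.append T.reverse)
    (Walk.isTrail_iff_count_le_one.2 fun e => by
      have := hcount e
      simp only [Walk.edges_append, Walk.edges_reverse, List.count_append, List.count_reverse]
      omega)
    (by simp only [Walk.length_append, Walk.length_reverse]; omega)
  simp only [Walk.length_append, Walk.length_reverse] at ha hb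
  omega

end SimpleGraph

namespace K4Sub

open SimpleGraph

variable {G : SimpleGraph V} (H : K4Sub G)

def edgeList : List (Sym2 V) :=
  H.P1.edges ++ H.P2.edges ++ H.Q1.edges ++ H.Q2.edges ++ H.L1.edges ++ H.L2.edges

theorem mem_edges_iff_mem_edgeList {e : Sym2 V} : e ∈ H.edges ↔ e ∈ H.edgeList := by
  simp [edges, edgeList]

theorem count_edgeList [DecidableEq V] (e : Sym2 V) :
    H.edgeList.count e = H.P1.edges.count e + H.P2.edges.count e + H.Q1.edges.count e +
      H.Q2.edges.count e + H.L1.edges.count e + H.L2.edges.count e := by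
  simp only [edgeList, List.count_append]

theorem mem_verts_of_mem_edges {a b : V} (h : s(a, b) ∈ H.edges) : a ∈ H.verts := by
  rcases h with h | h | h | h | h | h <;> simp [verts, Walk.fst_mem_support_of_mem_edges _ h]

/-- The four face cycles pass through every pair of non-opposite arrises, so as soon as they are
trails the only possible repeated edges are shared by opposite arrises, which are
vertex-disjoint. -/
theorem nodup_edgeList_of_isTrail (h₁ : H.C1.IsTrail) (h₂ : H.C2.IsTrail) (h₃ : H.C3.IsTrail)
    (h₄ : H.C4.IsTrail) : H.edgeList.Nodup := by
  classical
  refine List.nodup_iff_count_le_one.2 fun e => ?_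
  have c₁ := Walk.isTrail_iff_count_le_one.1 h₁ e
  have c₂ := Walk.isTrail_iff_count_le_one.1 h₂ e
  have c₃ := Walk.isTrail_iff_count_le_one.1 h₃ e
  have c₄ := Walk.isTrail_iff_count_le_one.1 h₄ e
  simp only [C1, C2, C3, C4, Walk.edges_append, Walk.edges_reverse, List.count_append,
    List.count_reverse] at c₁ c₂ c₃ c₄
  have oP := (Walk.disjoint_edges_of_disjoint_support H.hP).count_eq_zero_or e
  have oQ := (Walk.disjoint_edges_of_disjoint_support H.hQ).count_eq_zero_or e
  have oL := (Walk.disjoint_edges_of_disjoint_support H.hL).count_eq_zero_or e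
  rw [count_edgeList]
  omega

def IsLengthBalanced (l : ℕ) : Prop :=
  H.P1.length = H.P2.length ∧ H.Q1.length = H.Q2.length ∧ H.L1.length = H.L2.length ∧
    H.P1.length ≤ l ∧ H.Q1.length ≤ l ∧ H.L1.length ≤ l ∧
    H.P1.length + H.Q1.length + H.L1.length = 2 * l + 1

/-- Opposite arrises have equal length because any two faces sharing an arris have the same
length; an arris has length at most `l` because the two other pairs of opposite arrises form
a cycle of length at least `2l+1`, and it is the complement of that cycle in a face. -/
theorem isLengthBalanced (hE : H.edgeList.Nodup) {l : ℕ} (hg : 2 * l + 1 ≤ G.girth)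
    (h₁ : H.C1.length = 2 * l + 1) (h₂ : H.C2.length = 2 * l + 1)
    (h₃ : H.C3.length = 2 * l + 1) (h₄ : H.C4.length = 2 * l + 1) :
    H.IsLengthBalanced l := by
  classical
  simp only [C1, C2, C3, C4, Walk.length_append, Walk.length_reverse] at h₁ h₂ h₃ h₄
  have hc e := H.count_edgeList e ▸ List.nodup_iff_count_le_one.1 hE e
  have hu := H.hu
  simp only [List.nodup_cons, List.mem_cons, List.not_mem_nil] at hu
  have hP : H.P1.length ≠ 0 := fun h => hu.1 (.inl (H.P1.eq_of_length_eq_zero h))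
  have hQ : H.Q1.length ≠ 0 := fun h => hu.2.1 (.inl (H.Q1.eq_of_length_eq_zero h))
  have hPQ := girth_le_length_add_of_count_le H.P1 H.Q1 H.P2 H.Q2.reverse
    (fun e => by simp only [Walk.edges_reverse, List.count_reverse]; have := hc e; omega)
    (by omega)
  have hPL := girth_le_length_add_of_count_le H.P1 H.L2 H.P2.reverse H.L1.reverse
    (fun e => by simp only [Walk.edges_reverse, List.count_reverse]; have := hc e; omega)
    (by omega)
  have hQL := girth_le_length_add_of_count_le H.Q1 H.L1.reverse H.Q2 H.L2.reverse
    (fun e => by simp only [Walk.edges_reverse, List.count_reverse]; have := hc e; omega)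
    (by omega)
  simp only [Walk.length_reverse] at hPQ hPL hQL
  unfold IsLengthBalanced
  omega

/-- The relabelling of `H` that turns the pairs of opposite arrises `(P, Q, L)` into `(Q, L, P)`. -/
def rotate : K4Sub G where
  u1 := H.u2
  u2 := H.u3
  u3 := H.u1
  u4 := H.u4
  P1 := H.Q1
  P2 := H.Q2
  Q1 := H.L1.reverse
  Q2 := H.L2
  L1 := H.P1.reverse
  L2 := H.P2
  hu := by
    have := H.hu
    simp only [List.nodup_cons, List.mem_cons, List.not_mem_nil] at this ⊢
    tauto
  hP1 := H.hQ1
  hP2 := H.hQ2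
  hQ1 := H.hL1.reverse
  hQ2 := H.hL2
  hL1 := H.hP1.reverse
  hL2 := H.hP2
  hP := H.hQ
  hQ := by simpa using H.hL
  hL := by simpa using H.hP

theorem edgeList_rotate_perm : H.rotate.edgeList.Perm H.edgeList := by
  classical
  refine List.perm_iff_count.2 fun e => ?_
  simp only [count_edgeList, rotate, Walk.edges_reverse, List.count_reverse]
  omega

theorem mem_edges_rotate {e : Sym2 V} : e ∈ H.rotate.edges ↔ e ∈ H.edges := by
  rw [mem_edges_iff_mem_edgeList, mem_edges_iff_mem_edgeList, H.edgeList_rotate_perm.mem_iff]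

theorem IsLengthBalanced.rotate {H : K4Sub G} {l : ℕ} (h : H.IsLengthBalanced l) :
    H.rotate.IsLengthBalanced l := by
  simp only [IsLengthBalanced, K4Sub.rotate, Walk.length_reverse] at h ⊢
  omega

def IsOpposite (y z : V) : Prop :=
  (y ∈ H.P1.support ∧ z ∈ H.P2.support ∨ y ∈ H.P2.support ∧ z ∈ H.P1.support) ∨
    (y ∈ H.Q1.support ∧ z ∈ H.Q2.support ∨ y ∈ H.Q2.support ∧ z ∈ H.Q1.support) ∨
    (y ∈ H.L1.support ∧ z ∈ H.L2.support ∨ y ∈ H.L2.support ∧ z ∈ H.L1.support)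

/-- Given `y ∈ P1` and `z ∈ P2` joined by a trail `T` edge-disjoint from `H`, split `P1` at `y`
into pieces of lengths `t₁ + d₁` and `P2` at `z` into `t₂ + d₂`: each of the four routes from `y`
to `z` through `H` closes a circuit with `T`. -/
theorem exists_girth_le_route (hE : H.edgeList.Nodup) {y z : V}
    (hy : y ∈ H.P1.support) (hz : z ∈ H.P2.support) {T : G.Walk z y} (hT : T.IsTrail)
    (hTH : ∀ e ∈ T.edges, e ∉ H.edges) :
    ∃ t₁ d₁ t₂ d₂ : ℕ, t₁ + d₁ = H.P1.length ∧ t₂ + d₂ = H.P2.length ∧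
      G.girth ≤ t₁ + H.L1.length + t₂ + T.length ∧
      G.girth ≤ t₁ + H.Q2.length + d₂ + T.length ∧
      G.girth ≤ d₁ + H.Q1.length + t₂ + T.length ∧
      G.girth ≤ d₁ + H.L2.length + d₂ + T.length := by
  classical
  have hT0 : T.length ≠ 0 := fun h => H.hP y hy (T.eq_of_length_eq_zero h ▸ hz)
  have hP1 := H.P1.take_spec hy
  have hP2 := H.P2.take_spec hz
  set t₁ := H.P1.takeUntil y hy
  set d₁ := H.P1.dropUntil y hy
  set t₂ := H.P2.takeUntil z hz
  set d₂ := H.P2.dropUntil z hz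
  have hcount : ∀ e, t₁.edges.count e + d₁.edges.count e + t₂.edges.count e +
      d₂.edges.count e + H.Q1.edges.count e + H.Q2.edges.count e + H.L1.edges.count e +
      H.L2.edges.count e + T.edges.count e ≤ 1 := by
    intro e
    have hdisj : H.edgeList.Disjoint T.edges := fun _ h₁ h₂ =>
      hTH _ h₂ ((H.mem_edges_iff_mem_edgeList).2 h₁)
    have := List.nodup_iff_count_le_one.1 (hE.append hT.edges_nodup hdisj) e
    rw [List.count_append, count_edgeList, ← hP1, ← hP2] at this
    simp only [Walk.edges_append, List.count_append] at this
    omega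
  refine ⟨t₁.length, d₁.length, t₂.length, d₂.length, by rw [← Walk.length_append, hP1],
    by rw [← Walk.length_append, hP2], ?_, ?_, ?_, ?_⟩
  · simpa using girth_le_length_add_of_count_le t₁.reverse H.L1 t₂ T
      (fun e => by simp only [Walk.edges_reverse, List.count_reverse]; have := hcount e; omega)
      (by omega)
  · simpa using girth_le_length_add_of_count_le t₁.reverse H.Q2 d₂.reverse T
      (fun e => by simp only [Walk.edges_reverse, List.count_reverse]; have := hcount e; omega)
      (by omega)
  · exact girth_le_length_add_of_count_le d₁ H.Q1 t₂ T
      (fun e => by have := hcount e; omega) (by omega)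
  · simpa using girth_le_length_add_of_count_le d₁ H.L2 d₂.reverse T
      (fun e => by simp only [Walk.edges_reverse, List.count_reverse]; have := hcount e; omega)
      (by omega)

/-- Adding the first and fourth, and the second and third route bounds gives
`2l + 1 ≤ |P1| + 2|T| ≤ l + 2|T|`; for `|T| = 2`, `l = 3` the bounds then force `t₂ = d₂`,
against `t₂ + d₂ = 3`. -/
theorem IsLengthBalanced.false_of_mem_P1_P2 {H : K4Sub G} {l : ℕ}
    (hB : H.IsLengthBalanced l) (hE : H.edgeList.Nodup) (hg : 2 * l + 1 ≤ G.girth) {y z : V}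
    (hyz : y ∈ H.P1.support ∧ z ∈ H.P2.support ∨ y ∈ H.P2.support ∧ z ∈ H.P1.support)
    {T : G.Walk z y} (hT : T.IsTrail) (hTH : ∀ e ∈ T.edges, e ∉ H.edges)
    (hTl : T.length = 1 ∨ T.length = 2 ∧ 3 ≤ l) : False := by
  unfold IsLengthBalanced at hB
  rcases hyz with ⟨hy, hz⟩ | ⟨hy, hz⟩
  · obtain ⟨t₁, d₁, t₂, d₂, h⟩ := H.exists_girth_le_route hE hy hz hT hTH
    omega
  · obtain ⟨t₁, d₁, t₂, d₂, h⟩ := H.exists_girth_le_route hE hz hy hT.reverse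
      (by simpa using hTH)
    rw [Walk.length_reverse] at h
    omega

theorem IsLengthBalanced.false_of_isOpposite {H : K4Sub G} {l : ℕ}
    (hB : H.IsLengthBalanced l) (hE : H.edgeList.Nodup) (hg : 2 * l + 1 ≤ G.girth) {y z : V}
    (hyz : H.IsOpposite y z) {T : G.Walk z y} (hT : T.IsTrail)
    (hTH : ∀ e ∈ T.edges, e ∉ H.edges) (hTl : T.length = 1 ∨ T.length = 2 ∧ 3 ≤ l) : False := by
  have hTH' : ∀ e ∈ T.edges, e ∉ H.rotate.edges := fun e he h => hTH e he (H.mem_edges_rotate.1 h)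
  have hE' := H.edgeList_rotate_perm.nodup_iff.2 hE
  rcases hyz with hP | hQ | hL
  · exact hB.false_of_mem_P1_P2 hE hg hP hT hTH hTl
  · exact hB.rotate.false_of_mem_P1_P2 hE' hg hQ hT hTH' hTl
  · refine hB.rotate.rotate.false_of_mem_P1_P2 (H.rotate.edgeList_rotate_perm.nodup_iff.2 hE') hg
      ?_ hT (fun e he h => hTH' e he (H.rotate.mem_edges_rotate.1 h)) hTl
    simpa [K4Sub.rotate] using hL

end K4Sub

theorem MemGFam.length_eq_of_isOddHole {G : SimpleGraph V} {l : ℕ} (hG : MemGFam G l) {v : V}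
    {w : G.Walk v v} (hw : IsOddHole G w) : w.length = 2 * l + 1 := by
  have hlow := hG.1 ▸ SimpleGraph.girth_le_length hw.1.1
  have hup := hG.2 v w hw
  obtain ⟨k, hk⟩ := hw.2
  omega

namespace IsOddK4

open SimpleGraph

variable {G : SimpleGraph V} {H : K4Sub G}

theorem nodup_edgeList (hH : IsOddK4 G H) : H.edgeList.Nodup :=
  H.nodup_edgeList_of_isTrail hH.1.1.1.isCircuit.isTrail hH.2.1.1.1.isCircuit.isTrail
    hH.2.2.1.1.1.isCircuit.isTrail hH.2.2.2.1.1.isCircuit.isTrail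

theorem isLengthBalanced (hH : IsOddK4 G H) {l : ℕ} (hG : MemGFam G l) :
    H.IsLengthBalanced l :=
  H.isLengthBalanced hH.nodup_edgeList hG.1.ge (hG.length_eq_of_isOddHole hH.1)
    (hG.length_eq_of_isOddHole hH.2.1) (hG.length_eq_of_isOddHole hH.2.2.1)
    (hG.length_eq_of_isOddHole hH.2.2.2)

theorem exists_face_or_isOpposite (hH : IsOddK4 G H) {y z : V}
    (hy : y ∈ H.verts) (hz : z ∈ H.verts) :
    (∃ (v : V) (C : G.Walk v v), IsOddHole G C ∧ (∀ e ∈ C.edges, e ∈ H.edges) ∧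
      y ∈ C.support ∧ z ∈ C.support) ∨ H.IsOpposite y z := by
  have hcover : (y ∈ H.C1.support ∧ z ∈ H.C1.support) ∨ (y ∈ H.C2.support ∧ z ∈ H.C2.support) ∨
      (y ∈ H.C3.support ∧ z ∈ H.C3.support) ∨ (y ∈ H.C4.support ∧ z ∈ H.C4.support) ∨
      H.IsOpposite y z := by
    simp only [K4Sub.IsOpposite, K4Sub.C1, K4Sub.C2, K4Sub.C3, K4Sub.C4,
      Walk.mem_support_append_iff, Walk.support_reverse, List.mem_reverse]
    rcases hy with h | h | h | h | h | h <;> rcases hz with h' | h' | h' | h' | h' | h' <;>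
      simp [h, h']
  have hsub : ∀ e, e ∈ H.C1.edges ∨ e ∈ H.C2.edges ∨ e ∈ H.C3.edges ∨ e ∈ H.C4.edges →
      e ∈ H.edges := by
    intro e
    simp only [K4Sub.C1, K4Sub.C2, K4Sub.C3, K4Sub.C4, Walk.edges_append, Walk.edges_reverse,
      List.mem_append, List.mem_reverse, K4Sub.edges, Set.mem_ofPred_eq]
    tauto
  rcases hcover with h | h | h | h | h
  · exact .inl ⟨_, H.C1, hH.1, fun e he => hsub e (.inl he), h⟩
  · exact .inl ⟨_, H.C2, hH.2.1, fun e he => hsub e (.inr (.inl he)), h⟩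
  · exact .inl ⟨_, H.C3, hH.2.2.1, fun e he => hsub e (.inr (.inr (.inl he))), h⟩
  · exact .inl ⟨_, H.C4, hH.2.2.2, fun e he => hsub e (.inr (.inr (.inr he))), h⟩
  · exact .inr h

theorem mem_edges_of_adj (hH : IsOddK4 G H) {l : ℕ} (hG : MemGFam G l) {a b : V}
    (ha : a ∈ H.verts) (hb : b ∈ H.verts) (hab : G.Adj a b) : s(a, b) ∈ H.edges := by
  rcases hH.exists_face_or_isOpposite ha hb with ⟨v, C, hC, hCH, haC, hbC⟩ | hopp
  · exact hCH _ (hC.1.2.2 a haC b hbC hab)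
  · by_contra hne
    refine (hH.isLengthBalanced hG).false_of_isOpposite hH.nodup_edgeList hG.1.ge hopp
      (T := .cons hab.symm .nil) (by simp) ?_ (.inl rfl)
    simpa [Sym2.eq_swap] using hne

theorem eq_of_adj_of_adj (hH : IsOddK4 G H) {l : ℕ} (hG : MemGFam G l) (hl : 3 ≤ l) {x y z : V}
    (hx : x ∉ H.verts) (hy : y ∈ H.verts) (hz : z ∈ H.verts) (hxy : G.Adj x y)
    (hxz : G.Adj x z) : y = z := by
  by_contra hyz
  let T : G.Walk z y := .cons hxz.symm (.cons hxy .nil)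
  have hT : T.IsTrail := by simp [T, hxy.ne, hxz.ne', Ne.symm hyz]
  have hTH : ∀ e ∈ T.edges, e ∉ H.edges := by
    simp only [T, Walk.edges_cons, Walk.edges_nil, List.mem_cons, List.not_mem_nil, or_false,
      forall_eq_or_imp, forall_eq]
    exact ⟨fun h => hx (H.mem_verts_of_mem_edges (Sym2.eq_swap ▸ h)),
      fun h => hx (H.mem_verts_of_mem_edges h)⟩
  rcases hH.exists_face_or_isOpposite hy hz with ⟨v, C, hC, hCH, hyC, hzC⟩ | hopp
  · have := two_mul_girth_le_of_isTrail hC.1.1.isCircuit.isTrail hyC hzC hyz hT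
      fun e he hCe => hTH e he (hCH e hCe)
    rw [hG.length_eq_of_isOddHole hC] at this
    simp only [T, Walk.length_cons, Walk.length_nil] at this
    have hg := hG.1.ge
    omega
  · exact (hH.isLengthBalanced hG).false_of_isOpposite hH.nodup_edgeList hG.1.ge hopp hT hTH
      (.inr ⟨rfl, hl⟩)

end IsOddK4

theorem odd_K4_subdivision_properties_general {V : Type*}
    (l : ℕ) (G : SimpleGraph V) (hG : MemGFam G l)
    (H : K4Sub G) (hH : IsOddK4 G H) :
    (H.P1.length = H.P2.length ∧ H.Q1.length = H.Q2.length ∧ H.L1.length = H.L2.length ∧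
      H.P1.length ≤ l ∧ H.Q1.length ≤ l ∧ H.L1.length ≤ l) ∧
    (∀ a ∈ K4Sub.verts H, ∀ b ∈ K4Sub.verts H, G.Adj a b → s(a, b) ∈ K4Sub.edges H) ∧
    (3 ≤ l → ∀ x : V, x ∉ K4Sub.verts H →
      ∀ y ∈ K4Sub.verts H, ∀ z ∈ K4Sub.verts H, G.Adj x y → G.Adj x z → y = z) := by
  obtain ⟨hP, hQ, hL, hPl, hQl, hLl, -⟩ := hH.isLengthBalanced hG
  exact ⟨⟨hP, hQ, hL, hPl, hQl, hLl⟩, fun a ha b hb => hH.mem_edges_of_adj hG ha hb,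
    fun hl x hx y hy z hz => hH.eq_of_adj_of_adj hG hl hx hy hz⟩

/-- For `l ≥ 2` and an odd `K4`-subdivision `H` in `G ∈ 𝒢ₗ`:
(1) vertex-disjoint pairs of arrises have the same length and all arrises have
length at most `l`; (2) `H` is induced; (3) if `l ≥ 3`, no vertex outside `H`
has two or more neighbours in `H`. -/
theorem odd_K4_subdivision_properties {V : Type*} [Fintype V]
    (l : ℕ) (hl : 2 ≤ l) (G : SimpleGraph V) (hG : MemGFam G l)
    (H : K4Sub G) (hH : IsOddK4 G H) :
    (H.P1.length = H.P2.length ∧ H.Q1.length = H.Q2.length ∧ H.L1.length = H.L2.length ∧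
      H.P1.length ≤ l ∧ H.Q1.length ≤ l ∧ H.L1.length ≤ l) ∧
    (∀ a ∈ K4Sub.verts H, ∀ b ∈ K4Sub.verts H, G.Adj a b → s(a, b) ∈ K4Sub.edges H) ∧
    (3 ≤ l → ∀ x : V, x ∉ K4Sub.verts H →
      ∀ y ∈ K4Sub.verts H, ∀ z ∈ K4Sub.verts H, G.Adj x y → G.Adj x z → y = z) :=
  odd_K4_subdivision_properties_general l G hG H hH
end

section
/- Let l ≥ 4 be an integer, let G ∈ 𝒢_l and let C be an odd hole of G. If P is a jump over C that is not a local jump over C, then the induced subgraph G[V(C ∪ P)] contains a short jump over C. -/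
open SimpleGraph

variable {V : Type*}

/-! The hole `w` has length `2l + 1`, the girth of `G`, so a vertex off `w` has at most one
neighbour on `w`: two of them would close a cycle of length at most `l + 2` through the shorter
arc between them. If some inner vertex of the jump `P` sees an inner vertex of one arc of `w`,
non-locality yields an inner vertex of `P` seeing an inner vertex of the other arc. Walk along `P`
between these two vertices. If two consecutive attachments `b, b'` have distinct non-adjacent
hole neighbours `c, c'`, then `c b … b' c'` is a short jump. Otherwise the hole neighbours form a
chain of adjacent vertices of `w`, which avoids `s` and `t` (they see only the ends of `P`) and
so cannot leave the first arc. -/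

namespace SimpleGraph.Walk

variable {G : SimpleGraph V}

theorem IsPath.eq_of_mem_support_of_mem_support {u b v x : V} {A : G.Walk u b}
    {R : G.Walk b v} (h : (A.append R).IsPath) (hA : x ∈ A.support) (hR : x ∈ R.support) :
    x = b := by
  rw [isPath_def, support_append] at h
  rw [← cons_tail_support R, List.mem_cons] at hR
  rcases hR with rfl | hR
  · rfl
  · exact absurd hR (List.disjoint_of_nodup_append h hA)

theorem IsPath.isCycle_cons_concat {a a' z : V} {p : G.Walk a a'} (hp : p.IsPath)
    (hz : z ∉ p.support) (hne : a ≠ a') (h : G.Adj z a) (h' : G.Adj a' z) :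
    (cons h (p.concat h')).IsCycle := by
  refine (cons_isCycle_iff _ h).2 ⟨hp.concat hz h', ?_⟩
  rw [edges_concat, List.concat_eq_append, List.mem_append, List.mem_singleton, Sym2.eq_iff]
  rintro (he | ⟨rfl, -⟩ | ⟨-, rfl⟩)
  · exact hz (p.fst_mem_support_of_mem_edges he)
  · exact hz p.end_mem_support
  · exact hne rfl

theorem exists_eq_append_at_first (p : V → Prop) :
    ∀ {u v : V} (Q : G.Walk u v), p v →
      ∃ (y : V) (S : G.Walk u y) (R : G.Walk y v), Q = S.append R ∧ p y ∧
        ∀ z ∈ S.support, z ≠ y → ¬ p z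
  | _, _, nil, hv => ⟨_, nil, nil, rfl, hv, by simp⟩
  | u, _, cons h Q', hv => by
    by_cases hu : p u
    · exact ⟨u, nil, cons h Q', rfl, hu, by simp⟩
    · obtain ⟨y, S, R, rfl, hy, hS⟩ := exists_eq_append_at_first p Q' hv
      refine ⟨y, cons h S, R, rfl, hy, fun z hz hzy => ?_⟩
      rcases List.mem_cons.1 (support_cons h S ▸ hz) with rfl | hz
      · exact hu
      · exact hS z hz hzy

end SimpleGraph.Walk

open SimpleGraph Walk

section InducedPath

variable {G : SimpleGraph V}

theorem IsInducedPath.reverse {x y : V} {P : G.Walk x y} (h : IsInducedPath G P) :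
    IsInducedPath G P.reverse :=
  ⟨h.1.reverse, fun a ha b hb hab => by
    simpa using h.2 a (by simpa using ha) b (by simpa using hb) hab⟩

theorem IsInducedPath.eq_or_eq_of_adj {u b v x y : V} {A : G.Walk u b} {R : G.Walk b v}
    (h : IsInducedPath G (A.append R)) (hx : x ∈ A.support) (hy : y ∈ R.support)
    (hxy : G.Adj x y) : x = b ∨ y = b := by
  have he := h.2 x ((mem_support_append_iff A R).2 (Or.inl hx)) y
    ((mem_support_append_iff A R).2 (Or.inr hy)) hxy
  rcases List.mem_append.1 (edges_append A R ▸ he) with he | he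
  · exact Or.inr (h.1.eq_of_mem_support_of_mem_support (A.snd_mem_support_of_mem_edges he) hy)
  · exact Or.inl (h.1.eq_of_mem_support_of_mem_support hx (R.fst_mem_support_of_mem_edges he))

theorem IsInducedPath.of_append_left {u b v : V} {A : G.Walk u b} {R : G.Walk b v}
    (h : IsInducedPath G (A.append R)) : IsInducedPath G A := by
  refine ⟨h.1.of_append_left, fun x hx y hy hxy => ?_⟩
  have he := h.2 x ((mem_support_append_iff A R).2 (Or.inl hx)) y
    ((mem_support_append_iff A R).2 (Or.inl hy)) hxy
  refine (List.mem_append.1 (edges_append A R ▸ he)).resolve_right fun he => hxy.ne ?_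
  rw [h.1.eq_of_mem_support_of_mem_support hx (R.fst_mem_support_of_mem_edges he),
    h.1.eq_of_mem_support_of_mem_support hy (R.snd_mem_support_of_mem_edges he)]

theorem IsInducedPath.of_append_right {u b v : V} {A : G.Walk u b} {R : G.Walk b v}
    (h : IsInducedPath G (A.append R)) : IsInducedPath G R := by
  have := (reverse_append A R ▸ h.reverse).of_append_left.reverse
  rwa [reverse_reverse] at this

theorem IsInducedPath.cons {c x y : V} {P : G.Walk x y} (h : IsInducedPath G P)
    (hc : c ∉ P.support) (hcP : ∀ z ∈ P.support, G.Adj c z → z = x) (hcx : G.Adj c x) :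
    IsInducedPath G (cons hcx P) := by
  refine ⟨h.1.cons hc, fun a ha b hb hab => ?_⟩
  rw [support_cons, List.mem_cons] at ha hb
  rw [edges_cons, List.mem_cons]
  rcases ha with rfl | ha <;> rcases hb with rfl | hb
  · exact absurd rfl hab.ne
  · exact Or.inl (by rw [hcP b hb hab])
  · exact Or.inl (by rw [hcP a ha hab.symm, Sym2.eq_swap])
  · exact Or.inr (h.2 a ha b hb hab)

theorem IsInducedPath.concat {c x y : V} {P : G.Walk x y} (h : IsInducedPath G P)
    (hc : c ∉ P.support) (hcP : ∀ z ∈ P.support, G.Adj c z → z = y) (hyc : G.Adj y c) :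
    IsInducedPath G (P.concat hyc) := by
  have := (h.reverse.cons (by simpa using hc) (by simpa using hcP) hyc.symm).reverse
  rwa [← reverse_concat, reverse_reverse] at this

end InducedPath

section Arcs

variable {G : SimpleGraph V} {v : V} {w : G.Walk v v}

theorem exists_arcsOf (hw : w.IsCycle) {x y : V} (hx : x ∈ w.support)
    (hy : y ∈ w.support) (hxy : x ≠ y) :
    ∃ Q1 Q2 : G.Walk x y, ArcsOf G w Q1 Q2 ∧ Q1.length + Q2.length = w.length ∧
      ∀ z, z ∈ w.support ↔ z ∈ Q1.support ∨ z ∈ Q2.support := by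
  classical
  have hT : (w.rotate x hx).IsCycle := hw.rotate hx
  have hyT : y ∈ (w.rotate x hx).support := (mem_support_rotate_iff w x hx).2 hy
  obtain ⟨A, B, hAB, hA⟩ : ∃ (A : G.Walk x y) (B : G.Walk y x), A.append B = w.rotate x hx ∧
      A.IsPath := ⟨_, _, take_spec _ hyT, hT.isPath_takeUntil hyT⟩
  rw [← hAB] at hT
  have hB : B.IsPath := hT.isPath_of_append_right (not_nil_of_ne hxy)
  have hdisj : A.support.tail.Disjoint B.support.tail := by
    have := hT.support_nodup
    rw [tail_support_append] at this
    exact List.disjoint_of_nodup_append this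
  refine ⟨A, B.reverse, ⟨hx, hy, hxy, hA, hB.reverse, ?_, ?_⟩, ?_, fun z => ?_⟩
  · ext z
    simp only [Set.mem_inter_iff, Set.mem_ofPred_eq, support_reverse, List.mem_reverse,
      Set.mem_insert_iff, Set.mem_singleton_iff]
    refine ⟨fun ⟨hzA, hzB⟩ => ?_, ?_⟩
    · rw [← cons_tail_support A, List.mem_cons] at hzA
      rw [← cons_tail_support B, List.mem_cons] at hzB
      rcases hzA with rfl | hzA
      · exact Or.inl rfl
      rcases hzB with rfl | hzB
      · exact Or.inr rfl
      exact absurd hzB (hdisj hzA)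
    · rintro (rfl | rfl)
      · exact ⟨A.start_mem_support, B.end_mem_support⟩
      · exact ⟨A.end_mem_support, B.start_mem_support⟩
  · ext e
    simp only [Set.mem_ofPred_eq, Set.mem_union, edges_reverse, List.mem_reverse]
    rw [← (rotate_edges w x hx).mem_iff, ← hAB, edges_append, List.mem_append]
  · rw [length_reverse, ← length_append, hAB, length_rotate]
  · rw [support_reverse, List.mem_reverse, ← mem_support_append_iff, hAB,
      mem_support_rotate_iff]

theorem eq_of_adj_of_adj_of_isCycle (hw : w.IsCycle)
    (hlen : w.length + 5 ≤ 2 * G.girth) {z a a' : V} (hz : z ∉ w.support)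
    (ha : a ∈ w.support) (ha' : a' ∈ w.support) (haz : G.Adj a z) (ha'z : G.Adj a' z) :
    a = a' := by
  by_contra hne
  obtain ⟨Q1, Q2, harcs, hlen12, hsupp⟩ := exists_arcsOf hw ha ha' hne
  have girth_le : ∀ Q : G.Walk a a', Q.IsPath → (∀ u ∈ Q.support, u ∈ w.support) →
      G.girth ≤ Q.length + 2 := fun Q hQ hQw => by
    simpa using girth_le_length
      (hQ.isCycle_cons_concat (fun h => hz (hQw z h)) hne haz.symm ha'z)
  have h1 := girth_le Q1 harcs.2.2.2.1 fun u hu => (hsupp u).2 (Or.inl hu)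
  have h2 := girth_le Q2 harcs.2.2.2.2.1 fun u hu => (hsupp u).2 (Or.inr hu)
  omega

theorem MemGFam.eq_of_adj_of_adj {l : ℕ} (hG : MemGFam G l) (hl : 2 ≤ l) (hw : IsOddHole G w)
    {z a a' : V} (hz : z ∉ w.support) (ha : a ∈ w.support) (ha' : a' ∈ w.support)
    (haz : G.Adj a z) (ha'z : G.Adj a' z) : a = a' := by
  refine eq_of_adj_of_adj_of_isCycle hw.1.1 ?_ hz ha ha' haz ha'z
  obtain ⟨k, hk⟩ := hw.2
  have := hG.2 v w hw
  rw [hG.1]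
  omega

namespace ArcsOf

variable {s t : V} {Q1 Q2 : G.Walk s t}

theorem symm (h : ArcsOf G w Q1 Q2) : ArcsOf G w Q2 Q1 := by
  obtain ⟨hs, ht, hst, h1, h2, hinter, hedges⟩ := h
  exact ⟨hs, ht, hst, h2, h1, Set.inter_comm _ _ ▸ hinter, Set.union_comm _ _ ▸ hedges⟩

theorem eq_or_eq_of_mem (h : ArcsOf G w Q1 Q2) {z : V} (h1 : z ∈ Q1.support)
    (h2 : z ∈ Q2.support) : z = s ∨ z = t := by
  have : z ∈ ({s, t} : Set V) := h.2.2.2.2.2.1 ▸ ⟨h1, h2⟩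
  simpa using this

theorem mem_wInterior_of_adj (h : ArcsOf G w Q1 Q2) (hw : IsHole G w) {d d' : V}
    (hd : d ∈ wInterior Q1) (hdw : d ∈ w.support) (hd'w : d' ∈ w.support) (hd's : d' ≠ s)
    (hd't : d' ≠ t) (hadj : G.Adj d d') : d' ∈ wInterior Q1 := by
  have he : s(d, d') ∈ {e | e ∈ w.edges} := hw.2.2 d hdw d' hd'w hadj
  rw [h.2.2.2.2.2.2] at he
  rcases he with he | he
  · exact ⟨Q1.snd_mem_support_of_mem_edges he, hd's, hd't⟩
  · rcases h.eq_or_eq_of_mem hd.1 (Q2.fst_mem_support_of_mem_edges he) with hds | hdt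
    exacts [absurd hds hd.2.1, absurd hdt hd.2.2]

theorem mem_wInterior_of_reflTransGen (h : ArcsOf G w Q1 Q2) (hw : IsHole G w) {c c' : V}
    (hc : c ∈ wInterior Q1) (hcw : c ∈ w.support)
    (hchain : Relation.ReflTransGen
      (fun d d' => G.Adj d d' ∧ d' ∈ {a | a ∈ w.support ∧ a ≠ s ∧ a ≠ t}) c c') :
    c' ∈ wInterior Q1 := by
  suffices c' ∈ wInterior Q1 ∧ c' ∈ w.support from this.1
  induction hchain with
  | refl => exact ⟨hc, hcw⟩
  | tail _ hstep ih =>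
    obtain ⟨hadj, hd'w, hd's, hd't⟩ := hstep
    exact ⟨h.mem_wInterior_of_adj hw ih.1 ih.2 hd'w hd's hd't hadj, hd'w⟩

end ArcsOf

end Arcs

section Segments

variable {G : SimpleGraph V} {s t : V}

theorem IsInducedPath.middle_segment {x y : V} {A : G.Walk s x} {Q : G.Walk x y}
    {B : G.Walk y t}
    (h : IsInducedPath G (A.append (Q.append B))) (hx : x ≠ s) (hy : y ≠ t) :
    IsInducedPath G Q ∧ (∀ z ∈ Q.support, z ∈ wInterior (A.append (Q.append B))) ∧
      ∀ z ∈ Q.support, G.Adj s z ∨ G.Adj t z → z = x ∨ z = y := by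
  have h' : IsInducedPath G ((A.append Q).append B) := by rwa [← append_assoc]
  have hQB (z) (hz : z ∈ Q.support) : z ∈ (Q.append B).support :=
    (mem_support_append_iff Q B).2 (Or.inl hz)
  have hAQ (z) (hz : z ∈ Q.support) : z ∈ (A.append Q).support :=
    (mem_support_append_iff A Q).2 (Or.inr hz)
  refine ⟨h.of_append_right.of_append_left, fun z hz => ⟨?_, ?_, ?_⟩, fun z hz hadj => ?_⟩
  · exact (mem_support_append_iff A _).2 (Or.inr (hQB z hz))
  · rintro rfl
    exact hx (h.1.eq_of_mem_support_of_mem_support A.start_mem_support (hQB _ hz)).symm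
  · rintro rfl
    exact hy (h'.1.eq_of_mem_support_of_mem_support (hAQ _ hz) B.end_mem_support).symm
  · rcases hadj with hadj | hadj
    · exact Or.inl ((h.eq_or_eq_of_adj A.start_mem_support (hQB z hz) hadj).resolve_left
        (Ne.symm hx))
    · exact Or.inr ((h'.eq_or_eq_of_adj (hAQ z hz) B.end_mem_support hadj.symm).resolve_right
        (Ne.symm hy))

theorem IsInducedPath.exists_segment {P : G.Walk s t}
    (hP : IsInducedPath G P) {x y : V} (hx : x ∈ wInterior P) (hy : y ∈ wInterior P) :
    ∃ Q : G.Walk x y, IsInducedPath G Q ∧ (∀ z ∈ Q.support, z ∈ wInterior P) ∧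
      ∀ z ∈ Q.support, G.Adj s z ∨ G.Adj t z → z = x ∨ z = y := by
  classical
  have hxP : x ∈ P.support := hx.1
  by_cases hyD : y ∈ (P.dropUntil x hxP).support
  · obtain ⟨A, Q, B, rfl⟩ : ∃ (A : G.Walk s x) (Q : G.Walk x y) (B : G.Walk y t),
        P = A.append (Q.append B) :=
      ⟨_, _, _, by rw [take_spec _ hyD, take_spec]⟩
    exact ⟨Q, hP.middle_segment hx.2.1 hy.2.2⟩
  · have hyT : y ∈ (P.takeUntil x hxP).support := by
      have := hy.1
      rw [← take_spec P hxP, mem_support_append_iff] at this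
      exact this.resolve_right hyD
    obtain ⟨A, Q, B, rfl⟩ : ∃ (A : G.Walk s y) (Q : G.Walk y x) (B : G.Walk x t),
        P = A.append (Q.append B) :=
      ⟨_, _, _, by rw [append_assoc, take_spec _ hyT, take_spec]⟩
    obtain ⟨hQ, hQP, hQst⟩ := hP.middle_segment hy.2.1 hx.2.2
    refine ⟨Q.reverse, hQ.reverse, fun z hz => hQP z (by simpa using hz), fun z hz hadj => ?_⟩
    exact (hQst z (by simpa using hz) hadj).symm

end Segments

section ShortJumps

variable {G : SimpleGraph V} {v : V} {w : G.Walk v v}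

theorem mem_support_of_mem_wInterior_cons_concat {c x y c' z : V} {S : G.Walk x y}
    (hcx : G.Adj c x) (hyc' : G.Adj y c') (hz : z ∈ wInterior (cons hcx (S.concat hyc'))) :
    z ∈ S.support := by
  obtain ⟨hz, hzc, hzc'⟩ := hz
  rw [support_cons, support_concat, List.mem_cons, List.mem_append,
    List.mem_singleton] at hz
  tauto

theorem isShortJump_cons_concat (hw : IsHole G w) {c x y c' : V} {S : G.Walk x y}
    (hS : IsInducedPath G S) (hSw : ∀ z ∈ S.support, z ∉ w.support) (hc : c ∈ w.support)
    (hc' : c' ∈ w.support) (hne : c ≠ c') (hnadj : ¬ G.Adj c c')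
    (hatt : ∀ z ∈ S.support, ∀ a ∈ w.support, G.Adj a z → (z = x ∧ a = c) ∨ (z = y ∧ a = c'))
    (hcx : G.Adj c x) (hyc' : G.Adj y c') :
    IsShortJump G w (cons hcx (S.concat hyc')) := by
  have hind : IsInducedPath G (S.concat hyc') := by
    refine hS.concat (fun h => hSw c' h hc') (fun z hz hadj => ?_) hyc'
    rcases hatt z hz c' hc' hadj with ⟨-, rfl⟩ | ⟨rfl, -⟩
    exacts [absurd rfl hne, rfl]
  have hind' : IsInducedPath G (cons hcx (S.concat hyc')) := by
    refine hind.cons ?_ (fun z hz hadj => ?_) hcx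
    · rw [support_concat, List.mem_append, List.mem_singleton, not_or]
      exact ⟨fun h => hSw c h hc, hne⟩
    · rw [support_concat, List.mem_append, List.mem_singleton] at hz
      rcases hz with hz | rfl
      · rcases hatt z hz c hc hadj with ⟨rfl, -⟩ | ⟨-, rfl⟩
        exacts [rfl, absurd rfl hne]
      · exact absurd hadj hnadj
  refine ⟨⟨hw, hc, hc', hne, hnadj, hind', fun z hz => ?_⟩, fun a ha hac hac' z hz hadj => ?_⟩
  · exact hSw z (mem_support_of_mem_wInterior_cons_concat hcx hyc' hz)
  · rcases hatt z (mem_support_of_mem_wInterior_cons_concat hcx hyc' hz) a ha hadj with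
      ⟨-, rfl⟩ | ⟨-, rfl⟩
    exacts [hac rfl, hac' rfl]

theorem exists_shortJump_or_reflTransGen (hw : IsHole G w) (K : Set V) {b b' : V}
    (Q : G.Walk b b') (hQ : IsInducedPath G Q) (hQw : ∀ z ∈ Q.support, z ∉ w.support)
    (huniq : ∀ z ∈ Q.support, ∀ a ∈ w.support, ∀ a' ∈ w.support,
      G.Adj a z → G.Adj a' z → a = a')
    (hK : ∀ z ∈ Q.support, ∀ a ∈ w.support, G.Adj a z → a ∈ K)
    {c c' : V} (hc : c ∈ w.support) (hcb : G.Adj c b) (hc' : c' ∈ w.support)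
    (hc'b' : G.Adj c' b') :
    (∃ (x y : V) (P' : G.Walk x y), IsShortJump G w P' ∧ ∀ z ∈ wInterior P', z ∈ Q.support) ∨
      Relation.ReflTransGen (fun d d' => G.Adj d d' ∧ d' ∈ K) c c' := by
  match Q, hQ, hQw, huniq, hK with
  | nil, _, _, huniq, _ =>
    exact Or.inr (huniq b (start_mem_support _) c hc c' hc' hcb hc'b' ▸ .refl)
  | cons h Q', hQ, hQw, huniq, hK =>
    -- `y` is the first vertex of `Q` after `b` with a neighbour `c''` on `w`.
    obtain ⟨y, S, R, hQ', ⟨c'', hc'', hc''y⟩, hS⟩ :=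
      Q'.exists_eq_append_at_first (fun z => ∃ a ∈ w.support, G.Adj a z) ⟨c', hc', hc'b'⟩
    rw [hQ', ← cons_append] at hQ hQw huniq hK ⊢
    have hR (z) (hz : z ∈ R.support) : z ∈ ((cons h S).append R).support :=
      (mem_support_append_iff _ R).2 (Or.inr hz)
    by_cases hstep : c = c'' ∨ G.Adj c c''
    · rcases exists_shortJump_or_reflTransGen hw K R hQ.of_append_right
        (fun z hz => hQw z (hR z hz)) (fun z hz => huniq z (hR z hz))
        (fun z hz => hK z (hR z hz)) hc'' hc''y hc' hc'b' with ⟨x, y, P', hP', hint⟩ | hchain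
      · exact Or.inl ⟨x, y, P', hP', fun z hz => hR z (hint z hz)⟩
      · refine Or.inr ?_
        rcases hstep with rfl | hadj
        · exact hchain
        · exact .head ⟨hadj, hK y (hR y R.start_mem_support) c'' hc'' hc''y⟩ hchain
    · rw [not_or] at hstep
      have hS' (z) (hz : z ∈ (cons h S).support) : z ∈ ((cons h S).append R).support :=
        (mem_support_append_iff _ R).2 (Or.inl hz)
      refine Or.inl ⟨c, c'', _, isShortJump_cons_concat hw hQ.of_append_left
        (fun z hz => hQw z (hS' z hz)) hc hc'' hstep.1 hstep.2 (fun z hz a ha haz => ?_) hcb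
        hc''y.symm, fun z hz => hS' z (mem_support_of_mem_wInterior_cons_concat _ _ hz)⟩
      rcases List.mem_cons.1 (support_cons h S ▸ hz) with rfl | hzS
      · exact Or.inl ⟨rfl, huniq z (hS' z hz) a ha c hc haz hcb⟩
      · by_cases hzy : z = y
        · subst hzy
          exact Or.inr ⟨rfl, huniq z (hS' z hz) a ha c'' hc'' haz hc''y⟩
        · exact absurd ⟨a, ha, haz⟩ (hS z hzS hzy)
termination_by Q.length
decreasing_by rw [hQ', length_cons, length_append]; omega

end ShortJumps

theorem exists_shortJump_of_adj_both_arcs {G : SimpleGraph V} {v s t : V}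
    {w : G.Walk v v} {P Q1 Q2 : G.Walk s t} (hjump : IsJump G w P) (harcs : ArcsOf G w Q1 Q2)
    (huniq : ∀ z ∈ wInterior P, ∀ a ∈ w.support, ∀ a' ∈ w.support,
      G.Adj a z → G.Adj a' z → a = a')
    {c1 b1 c2 b2 : V} (hc1 : c1 ∈ wInterior Q1) (hc1w : c1 ∈ w.support)
    (hb1 : b1 ∈ wInterior P) (h1 : G.Adj c1 b1) (hc2 : c2 ∈ wInterior Q2)
    (hc2w : c2 ∈ w.support) (hb2 : b2 ∈ wInterior P) (h2 : G.Adj c2 b2) :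
    ∃ (x y : V) (P' : G.Walk x y), IsShortJump G w P' ∧
      ∀ a ∈ P'.support, a ∈ w.support ∨ a ∈ P.support := by
  obtain ⟨hw, -, -, -, -, hP, hPw⟩ := hjump
  obtain ⟨Q, hQ, hQP, hQst⟩ := hP.exists_segment hb1 hb2
  -- `s` and `t` are adjacent to `Q` at most at its ends, whose hole neighbours are `c1` and `c2`.
  have hK (z) (hz : z ∈ Q.support) (a) (ha : a ∈ w.support) (haz : G.Adj a z) :
      a ∈ {a | a ∈ w.support ∧ a ≠ s ∧ a ≠ t} := by
    have hend (hzb : z = b1 ∨ z = b2) : a ≠ s ∧ a ≠ t := by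
      rcases hzb with rfl | rfl
      · rw [huniq z (hQP z hz) a ha c1 hc1w haz h1]
        exact hc1.2
      · rw [huniq z (hQP z hz) a ha c2 hc2w haz h2]
        exact hc2.2
    exact ⟨ha, fun has => (hend (hQst z hz (Or.inl (has ▸ haz)))).1 has,
      fun hat => (hend (hQst z hz (Or.inr (hat ▸ haz)))).2 hat⟩
  rcases exists_shortJump_or_reflTransGen hw _ Q hQ (fun z hz => hPw z (hQP z hz))
    (fun z hz => huniq z (hQP z hz)) hK hc1w h1 hc2w h2 with ⟨x, y, P', hP', hint⟩ | hchain
  · refine ⟨x, y, P', hP', fun a ha => ?_⟩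
    by_cases hax : a = x
    · exact Or.inl (hax ▸ hP'.1.2.1)
    by_cases hay : a = y
    · exact Or.inl (hay ▸ hP'.1.2.2.1)
    exact Or.inr (hQP a (hint a ⟨ha, hax, hay⟩)).1
  · have hc2' := harcs.mem_wInterior_of_reflTransGen hw hc1 hc1w hchain
    rcases harcs.eq_or_eq_of_mem hc2'.1 hc2.1 with h | h
    exacts [absurd h hc2.2.1, absurd h hc2.2.2]

theorem nonlocal_jump_gives_short_jump_general {V : Type*}
    (l : ℕ) (hl : 4 ≤ l) (G : SimpleGraph V) (hG : MemGFam G l)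
    {v s t : V} (w : G.Walk v v) (hw : IsOddHole G w)
    (P : G.Walk s t) (hjump : IsJump G w P) (hnl : ¬ IsLocalJump G w P) :
    ∃ (s' t' : V) (P' : G.Walk s' t'), IsShortJump G w P' ∧
      ∀ a ∈ P'.support, a ∈ w.support ∨ a ∈ P.support := by
  by_cases hshort : IsShortJump G w P
  · exact ⟨s, t, P, hshort, fun a ha => Or.inr ha⟩
  obtain ⟨a1, ha1w, ha1s, ha1t, b1, hb1, h1⟩ :
      ∃ a ∈ w.support, a ≠ s ∧ a ≠ t ∧ ∃ b ∈ wInterior P, G.Adj a b := by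
    simpa [IsShortJump, hjump] using hshort
  have huniq (z) (hz : z ∈ wInterior P) (a) (ha : a ∈ w.support) (a') (ha' : a' ∈ w.support) :
      G.Adj a z → G.Adj a' z → a = a' :=
    hG.eq_of_adj_of_adj (by omega) hw (hjump.2.2.2.2.2.2 z hz) ha ha'
  obtain ⟨Q1, Q2, harcs, -, hcover⟩ :=
    exists_arcsOf hw.1.1 hjump.2.1 hjump.2.2.1 hjump.2.2.2.1
  wlog hQ1 : a1 ∈ Q1.support generalizing Q1 Q2
  · exact this Q2 Q1 harcs.symm (fun z => (hcover z).trans or_comm)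
      (((hcover a1).1 ha1w).resolve_left hQ1)
  obtain ⟨a2, ha2, b2, hb2, h2⟩ : ∃ a ∈ wInterior Q2, ∃ b ∈ wInterior P, G.Adj a b := by
    by_contra! h
    exact hnl ⟨Q1, Q2, hjump, harcs, ⟨a1, ⟨hQ1, ha1s, ha1t⟩, b1, hb1, h1⟩, h⟩
  exact exists_shortJump_of_adj_both_arcs hjump harcs huniq ⟨hQ1, ha1s, ha1t⟩ ha1w hb1 h1
    ha2 ((hcover a2).2 (Or.inr ha2.1)) hb2 h2

/-- If a jump `P` over the odd hole `w` is not local, then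
`G[V(C ∪ P)]` contains a short jump over `w`. -/
theorem nonlocal_jump_gives_short_jump {V : Type*} [Fintype V]
    (l : ℕ) (hl : 4 ≤ l) (G : SimpleGraph V) (hG : MemGFam G l)
    {v s t : V} (w : G.Walk v v) (hw : IsOddHole G w)
    (P : G.Walk s t) (hjump : IsJump G w P) (hnl : ¬ IsLocalJump G w P) :
    ∃ (s' t' : V) (P' : G.Walk s' t'), IsShortJump G w P' ∧
      ∀ a ∈ P'.support, a ∈ w.support ∨ a ∈ P.support :=
  nonlocal_jump_gives_short_jump_general l hl G hG w hw P hjump hnl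
end
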